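/- A finite family F of integer intervals is irredundant if and only if every interval s ⊆ ⋃F contains a point x such that at most one member of F|s contains x. -/

import Mathlib

open scoped Classical

/-- A finite family of sets is irredundant if its members can be arranged in a
sequence such that each set contains a point not in any of the preceding sets. -/
def Irredundant (F : Finset (Set ℤ)) : Prop :=
  ∃ l : List (Set ℤ), l.Nodup ∧ l.toFinset = F ∧
    ∀ i : Fin l.length, ∃ x ∈ l.get i, ∀ j : Fin l.length, j < i → x ∉ l.get j

/-- An interval is a nonempty half-open integer interval `[a,b)`. -/
def IsItv (s : Set ℤ) : Prop := ∃ a b : ℤ, a < b ∧ s = Set.Ico a b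

/-- `F|s`: the members of `F` contained in `s`. -/
noncomputable def Res (F : Finset (Set ℤ)) (s : Set ℤ) : Finset (Set ℤ) :=
  F.filter (fun f => f ⊆ s)

/-- `N_x F`: the number of members of `F` containing `x`. -/
noncomputable def Nx (F : Finset (Set ℤ)) (x : ℤ) : ℕ :=
  (F.filter (fun f => x ∈ f)).card

/-!
A nonempty subfamily `G` of an irredundant family has a point covered by exactly one member of
`G`: the private point of the member of `G` that comes last in the sequence. Conversely, if every
nonempty subfamily has such a point, removing the member covering it and recursing builds the
sequence backwards. For intervals this is equivalent to the stated condition: restrictions `F|s`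
are subfamilies, and a maximal interval `s` of `⋃ F` contains every member of `F` that it meets,
so a point of `s` covered at most once by `F|s` is covered exactly once by `F`.
-/

lemma nx_eq_one_iff {G : Finset (Set ℤ)} {x : ℤ} :
    Nx G x = 1 ↔ ∃ g ∈ G, x ∈ g ∧ ∀ h ∈ G, x ∈ h → h = g := by
  simp only [Nx, Finset.card_eq_one, Finset.eq_singleton_iff_unique_mem, Finset.mem_filter]
  aesop

lemma nx_mono {G F : Finset (Set ℤ)} (hGF : G ⊆ F) (x : ℤ) : Nx G x ≤ Nx F x :=
  Finset.card_le_card (Finset.monotone_filter_left _ hGF)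

lemma Irredundant.insert {F : Finset (Set ℤ)} {f : Set ℤ} {x : ℤ} (hF : Irredundant F)
    (hxf : x ∈ f) (hxF : ∀ g ∈ F, x ∉ g) : Irredundant (insert f F) := by
  obtain ⟨l, hnd, rfl, hl⟩ := hF
  have hfl : f ∉ l := fun h => hxF f (List.mem_toFinset.mpr h) hxf
  refine ⟨l ++ [f], ?_, ?_, ?_⟩
  · simpa [List.nodup_append, hnd] using fun a ha (haf : a = f) => hfl (haf ▸ ha)
  · simp
  intro ⟨i, hi⟩
  simp only [List.get_eq_getElem]
  rcases Nat.lt_or_ge i l.length with hil | hil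
  · obtain ⟨y, hy, hyl⟩ := hl ⟨i, hil⟩
    refine ⟨y, by simpa [List.getElem_append_left hil] using hy, fun ⟨j, hj⟩ hji => ?_⟩
    have hjl : j < l.length := lt_trans hji hil
    simpa [List.getElem_append_left hjl] using hyl ⟨j, hjl⟩ hji
  · have hil : i = l.length := by
      simp only [List.length_append, List.length_singleton] at hi; omega
    refine ⟨x, by rwa [List.getElem_concat_length hil], fun ⟨j, hj⟩ hji => ?_⟩
    have hjl : j < l.length := hil ▸ hji
    simpa [List.getElem_append_left hjl] using
      hxF _ (List.mem_toFinset.mpr (List.getElem_mem hjl))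

lemma Irredundant.exists_nx_eq_one {F G : Finset (Set ℤ)} (hF : Irredundant F) (hGF : G ⊆ F)
    (hG : G.Nonempty) : ∃ x, Nx G x = 1 := by
  obtain ⟨l, -, rfl, hl⟩ := hF
  have mem_get {g : Set ℤ} (hg : g ∈ G) : ∃ i, l.get i = g :=
    List.mem_iff_get.mp (List.mem_toFinset.mp (hGF hg))
  let I : Finset (Fin l.length) := Finset.univ.filter (l.get · ∈ G)
  have hI : I.Nonempty := by
    obtain ⟨g, hg⟩ := hG
    obtain ⟨i, rfl⟩ := mem_get hg
    exact ⟨i, by simpa [I] using hg⟩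
  have hiG : l.get (I.max' hI) ∈ G := by simpa [I] using I.max'_mem hI
  obtain ⟨x, hxi, hxj⟩ := hl (I.max' hI)
  refine ⟨x, nx_eq_one_iff.mpr ⟨_, hiG, hxi, fun h hh hxh => ?_⟩⟩
  obtain ⟨j, rfl⟩ := mem_get hh
  have hji : j ≤ I.max' hI := I.le_max' j (by simpa [I] using hh)
  rw [hji.lt_or_eq.resolve_left fun hlt => hxj j hlt hxh]

lemma irredundant_of_forall_exists_nx_eq_one {F : Finset (Set ℤ)}
    (h : ∀ G ⊆ F, G.Nonempty → ∃ x, Nx G x = 1) : Irredundant F := by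
  induction F using Finset.strongInduction with
  | _ F ih =>
  rcases F.eq_empty_or_nonempty with rfl | hne
  · exact ⟨[], List.nodup_nil, rfl, fun i => i.elim0⟩
  obtain ⟨x, hx⟩ := h F subset_rfl hne
  obtain ⟨f, hfF, hxf, hf⟩ := nx_eq_one_iff.mp hx
  have hrest : Irredundant (F.erase f) :=
    ih _ (Finset.erase_ssubset hfF) fun G hG => h G (hG.trans (Finset.erase_subset f F))
  rw [← Finset.insert_erase hfF]
  exact hrest.insert hxf fun g hg hxg =>
    Finset.ne_of_mem_erase hg (hf g (Finset.mem_of_mem_erase hg) hxg)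

lemma irredundant_iff_forall_exists_nx_eq_one {F : Finset (Set ℤ)} :
    Irredundant F ↔ ∀ G ⊆ F, G.Nonempty → ∃ x, Nx G x = 1 :=
  ⟨fun hF _ => hF.exists_nx_eq_one, irredundant_of_forall_exists_nx_eq_one⟩

lemma BddBelow.exists_sub_one_notMem_Icc_subset {U : Set ℤ} (hU : BddBelow U) {p : ℤ} (hp : p ∈ U) :
    ∃ a ≤ p, a - 1 ∉ U ∧ Set.Icc a p ⊆ U := by
  obtain ⟨m, hm⟩ := hU
  obtain ⟨c, ⟨hcp, hcU⟩, hc⟩ := Int.exists_greatest_of_bdd (P := fun c => c ≤ p ∧ c ∉ U)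
    ⟨p, fun _ h => h.1⟩ ⟨m - 1, by linarith [hm hp], fun h => by linarith [hm h]⟩
  have hcp : c < p := lt_of_le_of_ne hcp fun h => hcU (h ▸ hp)
  refine ⟨c + 1, by omega, by simpa using hcU, fun y hy => ?_⟩
  by_contra hyU
  linarith [hc y ⟨hy.2, hyU⟩, hy.1]

lemma BddAbove.exists_notMem_Ico_subset {U : Set ℤ} (hU : BddAbove U) {p : ℤ} (hp : p ∈ U) :
    ∃ b > p, b ∉ U ∧ Set.Ico p b ⊆ U := by
  obtain ⟨m, hm⟩ := hU
  obtain ⟨c, ⟨hpc, hcU⟩, hc⟩ := Int.exists_least_of_bdd (P := fun c => p ≤ c ∧ c ∉ U)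
    ⟨p, fun _ h => h.1⟩ ⟨m + 1, by linarith [hm hp], fun h => by linarith [hm h]⟩
  have hpc : p < c := lt_of_le_of_ne hpc fun h => hcU (h ▸ hp)
  refine ⟨c, hpc, hcU, fun y hy => ?_⟩
  by_contra hyU
  linarith [hc y ⟨hy.1, hyU⟩, hy.2]

lemma Set.OrdConnected.subset_Ico_of_notMem {f U : Set ℤ} {a b y : ℤ} (hf : f.OrdConnected)
    (hfU : f ⊆ U) (ha : a - 1 ∉ U) (hb : b ∉ U) (hyf : y ∈ f) (hy : y ∈ Set.Ico a b) :
    f ⊆ Set.Ico a b := by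
  intro z hz
  by_contra hzs
  rcases lt_or_ge z a with hza | hza
  · exact ha (hfU (hf.out hz hyf ⟨by omega, by linarith [hy.1]⟩))
  · have hbz : b ≤ z := not_lt.mp fun hzb => hzs ⟨hza, hzb⟩
    exact hb (hfU (hf.out hyf hz ⟨hy.2.le, hbz⟩))

lemma nx_res_eq {F : Finset (Set ℤ)} {s : Set ℤ} {x : ℤ} (h : ∀ f ∈ F, x ∈ f → f ⊆ s) :
    Nx (Res F s) x = Nx F x := by
  unfold Nx Res
  rw [Finset.filter_filter]
  exact congrArg Finset.card <|
    Finset.filter_congr fun f hf => ⟨And.right, fun hxf => ⟨h f hf hxf, hxf⟩⟩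

def HasGoodSubintervals (F : Finset (Set ℤ)) : Prop :=
  ∀ s : Set ℤ, IsItv s → s ⊆ ⋃₀ (↑F : Set (Set ℤ)) → ∃ x ∈ s, Nx (Res F s) x ≤ 1

lemma HasGoodSubintervals.mono {F G : Finset (Set ℤ)} (h : HasGoodSubintervals F)
    (hGF : G ⊆ F) : HasGoodSubintervals G := fun s hs hsG => by
  obtain ⟨x, hxs, hx⟩ := h s hs (hsG.trans (Set.sUnion_mono (by exact_mod_cast hGF)))
  exact ⟨x, hxs, (nx_mono (Finset.monotone_filter_left _ hGF) x).trans hx⟩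

lemma hasGoodSubintervals_of_forall_exists_nx_eq_one {F : Finset (Set ℤ)}
    (h : ∀ G ⊆ F, G.Nonempty → ∃ x, Nx G x = 1) : HasGoodSubintervals F := by
  rintro s ⟨a, b, hab, rfl⟩ -
  rcases (Res F (Set.Ico a b)).eq_empty_or_nonempty with hempty | hne
  · exact ⟨a, ⟨le_rfl, hab⟩, by simp [Nx, hempty]⟩
  obtain ⟨x, hx⟩ := h _ (Finset.filter_subset _ _) hne
  obtain ⟨g, hg, hxg, -⟩ := nx_eq_one_iff.mp hx
  exact ⟨x, (Finset.mem_filter.mp hg).2 hxg, hx.le⟩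

lemma HasGoodSubintervals.exists_nx_eq_one {F : Finset (Set ℤ)} (hF : ∀ f ∈ F, IsItv f)
    (h : HasGoodSubintervals F) (hne : F.Nonempty) : ∃ x, Nx F x = 1 := by
  set U := ⋃₀ (↑F : Set (Set ℤ))
  have hUfin : U.Finite := F.finite_toSet.sUnion fun f hf => by
    obtain ⟨a, b, -, rfl⟩ := hF f hf
    exact Set.finite_Ico a b
  obtain ⟨f₀, hf₀⟩ := hne
  obtain ⟨p, hp⟩ : f₀.Nonempty := by
    obtain ⟨a, b, hab, rfl⟩ := hF f₀ hf₀
    exact Set.nonempty_Ico.mpr hab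
  have hpU : p ∈ U := ⟨f₀, hf₀, hp⟩
  -- `Set.Ico a b` is the maximal interval of `U` through `p`
  obtain ⟨a, hap, ha, haU⟩ := hUfin.bddBelow.exists_sub_one_notMem_Icc_subset hpU
  obtain ⟨b, hpb, hb, hbU⟩ := hUfin.bddAbove.exists_notMem_Ico_subset hpU
  have hsU : Set.Ico a b ⊆ U := fun y hy =>
    (le_or_gt y p).elim (fun hyp => haU ⟨hy.1, hyp⟩) fun hpy => hbU ⟨hpy.le, hy.2⟩
  obtain ⟨x, hxs, hx⟩ := h _ ⟨a, b, by omega, rfl⟩ hsU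
  have hres : Nx (Res F (Set.Ico a b)) x = Nx F x := nx_res_eq fun f hf hxf => by
    obtain ⟨c, d, -, rfl⟩ := hF f hf
    exact Set.ordConnected_Ico.subset_Ico_of_notMem
      (Set.subset_sUnion_of_mem hf) ha hb hxf hxs
  obtain ⟨f, hf, hxf⟩ := hsU hxs
  have hpos : 0 < Nx F x := Finset.card_pos.mpr ⟨f, Finset.mem_filter.mpr ⟨hf, hxf⟩⟩
  exact ⟨x, by omega⟩

/-- `F` is irredundant iff every interval `s ⊆ ⋃ F` contains a point `x` with
`N_x (F|s) ≤ 1`. -/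
theorem irredundant_iff_every_subinterval_good (F : Finset (Set ℤ))
    (hF : ∀ f ∈ F, IsItv f) :
    Irredundant F ↔
      ∀ s : Set ℤ, IsItv s → s ⊆ ⋃₀ (↑F : Set (Set ℤ)) →
        ∃ x ∈ s, Nx (Res F s) x ≤ 1 := by
  rw [irredundant_iff_forall_exists_nx_eq_one]
  refine ⟨hasGoodSubintervals_of_forall_exists_nx_eq_one, fun h G hGF hG => ?_⟩
  exact (HasGoodSubintervals.mono h hGF).exists_nx_eq_one (fun g hg => hF g (hGF hg)) hG
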